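/- The destination-first ordering ⪯ restricted to the set of destination–source pairs matching a fixed address pair (a_d, a_s) is a total order. -/

import Mathlib

/-- Addresses are bitvectors of fixed length `n`. -/
abbrev Addr (n : ℕ) := Fin n → Bool

/-- The set of addresses denoted by the prefix `p/plen`. -/
def pset (n : ℕ) (P : Addr n × ℕ) : Set (Addr n) :=
  {a | ∀ i : Fin n, (i : ℕ) < P.2 → a i = P.1 i}

/-- Destination and source address sets of an entry. -/
def dset (n : ℕ) (e : (Addr n × ℕ) × (Addr n × ℕ)) : Set (Addr n) := pset n e.1
def sset (n : ℕ) (e : (Addr n × ℕ) × (Addr n × ℕ)) : Set (Addr n) := pset n e.2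

/-- Destination-first ordering. -/
def DF (n : ℕ) (e e' : (Addr n × ℕ) × (Addr n × ℕ)) : Prop :=
  dset n e ⊂ dset n e' ∨ (dset n e = dset n e' ∧ sset n e ⊆ sset n e')

lemma pset_subset_pset_of_mem_of_le {n : ℕ} {a : Addr n} {P P' : Addr n × ℕ}
    (ha : a ∈ pset n P) (ha' : a ∈ pset n P') (hle : P.2 ≤ P'.2) :
    pset n P' ⊆ pset n P := by
  intro b hb i hi
  have hi' : (i : ℕ) < P'.2 := hi.trans_le hle
  rw [hb i hi', ← ha' i hi', ha i hi]

lemma pset_subset_or_supset_of_mem {n : ℕ} {a : Addr n} {P P' : Addr n × ℕ}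
    (ha : a ∈ pset n P) (ha' : a ∈ pset n P') :
    pset n P ⊆ pset n P' ∨ pset n P' ⊆ pset n P :=
  (le_total P'.2 P.2).imp (pset_subset_pset_of_mem_of_le ha' ha)
    (pset_subset_pset_of_mem_of_le ha ha')

lemma lex_total_of_comparable {α β : Type*} [PartialOrder α] [LE β] {d d' : α} {s s' : β}
    (hd : d ≤ d' ∨ d' ≤ d) (hs : s ≤ s' ∨ s' ≤ s) :
    (d < d' ∨ d = d' ∧ s ≤ s') ∨ (d' < d ∨ d' = d ∧ s' ≤ s) := by
  rcases eq_or_ne d d' with rfl | hne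
  · rcases hs with hs | hs
    · exact Or.inl (Or.inr ⟨rfl, hs⟩)
    · exact Or.inr (Or.inr ⟨rfl, hs⟩)
  · rcases hd with hd | hd
    · exact Or.inl (Or.inl (hd.lt_of_ne hne))
    · exact Or.inr (Or.inl (hd.lt_of_ne hne.symm))

/-- The destination-first ordering is total on the destination–source pairs
    matching a fixed address pair `(a_d, a_s)`. -/
theorem stmt8 (n : ℕ) (a : Addr n × Addr n)
    (e e' : (Addr n × ℕ) × (Addr n × ℕ))
    (h : a.1 ∈ dset n e ∧ a.2 ∈ sset n e)
    (h' : a.1 ∈ dset n e' ∧ a.2 ∈ sset n e') :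
    DF n e e' ∨ DF n e' e :=
  lex_total_of_comparable (pset_subset_or_supset_of_mem h.1 h'.1)
    (pset_subset_or_supset_of_mem h.2 h'.2)
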